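/- arXiv:1003.4541 — 4 statements merged into one kernel-verified Lean document; each statement's English description precedes it below -/
import Mathlib

section
/- Let z₁, z₂ ∈ ℂ with Im(z₁) > 0, Im(z₂) > 0, |z₁| ≥ 80(2π)² and |z₂| ≥ 80(2π)². Suppose that |4π·Im(z₁)/|z₁|² − 4π·Im(z₂)/|z₂|²| ≤ 16(2π)³·(4·Im(z₁)²/|z₁|⁴ + 4·Im(z₂)²/|z₂|⁴) and |4π·Re(z₁)/|z₁|² − 4π·Re(z₂)/|z₂|²| ≤ 20(2π)³·(4·Im(z₁)²/|z₁|⁴ + 4·Im(z₂)²/|z₂|⁴). Then |z₁ − z₂| < 560(2π)²·Im(z₁)/|z₁|. -/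
open Real

/-! The inversion `z ↦ z / ‖z‖ ^ 2` scales distances by `1 / (‖z₁‖ * ‖z₂‖)`, and the hypotheses
bound the real and imaginary parts of the difference of the inverted points by multiples of
`(2π)² (a² + b²)`, where `a = Im z₁ / ‖z₁‖²` and `b = Im z₂ / ‖z₂‖²`. Since `‖z‖ ≥ 80 (2π)²`, the
bound on `|a - b|` forces `|a - b| ≤ 2/5 (a + b)`, so `a` and `b` are comparable and
`a² + b² ≤ 14/3 ab`. Undoing the inversion gives
`‖z₁ - z₂‖ ≤ 336 (2π)² (Im z₁ / ‖z₁‖) (Im z₂ / ‖z₂‖)`, and `Im z₂ ≤ ‖z₂‖`. -/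

lemma abs_sub_le_of_abs_mul_sub_mul_le {p x y M : ℝ} (hp : 0 < p)
    (h : |p * x - p * y| ≤ p * M) : |x - y| ≤ M := by
  rw [← mul_sub, abs_mul, abs_of_pos hp] at h
  exact le_of_mul_le_mul_left h hp

lemma abs_sub_le_mul_add_of_abs_sub_le_mul_sq_add_sq {a b C s : ℝ} (ha : 0 ≤ a) (hb : 0 ≤ b)
    (hCa : C * a ≤ s) (hCb : C * b ≤ s) (h : |a - b| ≤ C * (a ^ 2 + b ^ 2)) :
    |a - b| ≤ s * (a + b) := by
  nlinarith [mul_le_mul_of_nonneg_right hCa ha, mul_le_mul_of_nonneg_right hCb hb]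

lemma sq_add_sq_mul_le_of_abs_sub_le {a b t : ℝ} (ha : 0 ≤ a) (hb : 0 ≤ b)
    (h : |a - b| ≤ t * (a + b)) : (1 - t) * (a ^ 2 + b ^ 2) ≤ 2 * (1 + t) * (a * b) := by
  have hab : (1 - t) * a ≤ (1 + t) * b := by linarith [le_abs_self (a - b)]
  have hba : (1 - t) * b ≤ (1 + t) * a := by linarith [neg_abs_le (a - b)]
  nlinarith [mul_le_mul_of_nonneg_left hab ha, mul_le_mul_of_nonneg_left hba hb]

lemma Complex.mul_im_div_norm_sq_le_one {z : ℂ} {K : ℝ} (hK : 0 < K) (hz : K ≤ ‖z‖) :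
    K * (z.im / ‖z‖ ^ 2) ≤ 1 := by
  have hz₀ : 0 < ‖z‖ := hK.trans_le hz
  rw [← mul_div_assoc, div_le_one (by positivity)]
  nlinarith [z.im_le_norm]

lemma Complex.norm_sub_le_mul_abs_re_add_abs_im_div_norm_sq {z₁ z₂ : ℂ} (hz₁ : z₁ ≠ 0)
    (hz₂ : z₂ ≠ 0) :
    ‖z₁ - z₂‖ ≤ ‖z₁‖ * ‖z₂‖ * (|z₁.re / ‖z₁‖ ^ 2 - z₂.re / ‖z₂‖ ^ 2| +
      |z₁.im / ‖z₁‖ ^ 2 - z₂.im / ‖z₂‖ ^ 2|) := by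
  have hinv := dist_div_norm_sq_smul hz₁ hz₂ 1
  rw [dist_eq_norm, dist_eq_norm] at hinv
  calc ‖z₁ - z₂‖ = ‖z₁‖ * ‖z₂‖ * ‖(1 / ‖z₁‖) ^ 2 • z₁ - (1 / ‖z₂‖) ^ 2 • z₂‖ := by
        rw [hinv]; field_simp
    _ ≤ ‖z₁‖ * ‖z₂‖ * (|((1 / ‖z₁‖) ^ 2 • z₁ - (1 / ‖z₂‖) ^ 2 • z₂).re| +
          |((1 / ‖z₁‖) ^ 2 • z₁ - (1 / ‖z₂‖) ^ 2 • z₂).im|) := by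
        gcongr; exact Complex.norm_le_abs_re_add_abs_im _
    _ = _ := by
        simp only [Complex.sub_re, Complex.sub_im, Complex.smul_re, Complex.smul_im, smul_eq_mul,
          div_pow, one_pow, one_div_mul_eq_div]

theorem lengths_close_implies_w_close (z₁ z₂ : ℂ)
    (him₁ : 0 < z₁.im) (him₂ : 0 < z₂.im)
    (habs₁ : 80 * (2 * π) ^ 2 ≤ ‖z₁‖)
    (habs₂ : 80 * (2 * π) ^ 2 ≤ ‖z₂‖)
    (hL : |4 * π * z₁.im / (‖z₁‖) ^ 2 - 4 * π * z₂.im / (‖z₂‖) ^ 2| ≤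
      16 * (2 * π) ^ 3 *
        (4 * z₁.im ^ 2 / (‖z₁‖) ^ 4 + 4 * z₂.im ^ 2 / (‖z₂‖) ^ 4))
    (hA : |4 * π * z₁.re / (‖z₁‖) ^ 2 - 4 * π * z₂.re / (‖z₂‖) ^ 2| ≤
      20 * (2 * π) ^ 3 *
        (4 * z₁.im ^ 2 / (‖z₁‖) ^ 4 + 4 * z₂.im ^ 2 / (‖z₂‖) ^ 4)) :
    ‖z₁ - z₂‖ < 560 * (2 * π) ^ 2 * z₁.im / ‖z₁‖ := by
  have hz₁ : 0 < ‖z₁‖ := by linarith [show 0 < 80 * (2 * π) ^ 2 by positivity]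
  have hz₂ : 0 < ‖z₂‖ := by linarith [show 0 < 80 * (2 * π) ^ 2 by positivity]
  have hIm : |z₁.im / ‖z₁‖ ^ 2 - z₂.im / ‖z₂‖ ^ 2| ≤
      32 * (2 * π) ^ 2 * ((z₁.im / ‖z₁‖ ^ 2) ^ 2 + (z₂.im / ‖z₂‖ ^ 2) ^ 2) :=
    abs_sub_le_of_abs_mul_sub_mul_le (p := 4 * π) (by positivity)
      (by convert hL using 1 <;> ring_nf)
  have hRe : |z₁.re / ‖z₁‖ ^ 2 - z₂.re / ‖z₂‖ ^ 2| ≤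
      40 * (2 * π) ^ 2 * ((z₁.im / ‖z₁‖ ^ 2) ^ 2 + (z₂.im / ‖z₂‖ ^ 2) ^ 2) :=
    abs_sub_le_of_abs_mul_sub_mul_le (p := 4 * π) (by positivity)
      (by convert hA using 1 <;> ring_nf)
  have ha := Complex.mul_im_div_norm_sq_le_one (by positivity) habs₁
  have hb := Complex.mul_im_div_norm_sq_le_one (by positivity) habs₂
  set c := (2 * π) ^ 2
  set a := z₁.im / ‖z₁‖ ^ 2
  set b := z₂.im / ‖z₂‖ ^ 2
  have hc : 0 < c := by positivity
  have hab : a ^ 2 + b ^ 2 ≤ 14 / 3 * (a * b) := by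
    have := sq_add_sq_mul_le_of_abs_sub_le (by positivity) (by positivity)
      (abs_sub_le_mul_add_of_abs_sub_le_mul_sq_add_sq (s := 2 / 5) (by positivity)
        (by positivity) (by linarith) (by linarith) hIm)
    linarith
  have him_le : z₂.im / ‖z₂‖ ≤ 1 := (div_le_one hz₂).2 z₂.im_le_norm
  calc ‖z₁ - z₂‖ ≤ ‖z₁‖ * ‖z₂‖ * (40 * c * (a ^ 2 + b ^ 2) + 32 * c * (a ^ 2 + b ^ 2)) :=
        (Complex.norm_sub_le_mul_abs_re_add_abs_im_div_norm_sq (norm_pos_iff.1 hz₁)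
          (norm_pos_iff.1 hz₂)).trans (by gcongr)
    _ ≤ ‖z₁‖ * ‖z₂‖ * (72 * c * (14 / 3 * (a * b))) := by
        gcongr; linarith [mul_le_mul_of_nonneg_left hab hc.le]
    _ = 336 * c * (z₁.im / ‖z₁‖) * (z₂.im / ‖z₂‖) := by simp only [a, b]; field_simp; ring
    _ ≤ 336 * c * (z₁.im / ‖z₁‖) := mul_le_of_le_one_right (by positivity) him_le
    _ < 560 * c * z₁.im / ‖z₁‖ := by rw [mul_div_assoc]; gcongr; norm_num
end

section
/- Let R > 0, α > 0 and x, y ∈ ℝ. If (−tanh(R)·(2·cosh²(R)+1)/cosh²(R))·(x² + y²) + (tanh(R)/(2·α²·cosh²(R)·sinh²(R)))·x + (tanh(R) + tanh³(R))/(16·α⁴·sinh⁴(R)) ≥ 0, then −(1/sinh²(R))·((2·sinh²(R)+1)/(2·sinh²(R)+3)) ≤ 4·α²·x ≤ 1/sinh²(R), and |4·α²·y| ≤ (2/sinh²(R))·(cosh²(R)/(2·cosh²(R)+1)). -/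
/-!
Put `p = sinh² R`, `k = 2p + 3 = 2cosh² R + 1`, `w = 4α²p·x` and `z = 4α²p·y`. Divided by
`tanh R` and cleared of denominators, the hypothesis becomes `k(w² + z²) ≤ 2w + (k - 2)`;
completing the square, this says that `(w, z)` lies in the closed disc with centre `(1/k, 0)`
and radius `(k - 1)/k`. The three estimates are the extents of this disc:
`(2 - k)/k ≤ w ≤ 1` and `|z| ≤ (k - 1)/k`.
-/

open Real

theorem sq_add_sq_le_of_quadratic_le {k w z : ℝ} (hk : 0 < k)
    (h : k * (w ^ 2 + z ^ 2) ≤ 2 * w + (k - 2)) :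
    (k * w - 1) ^ 2 + (k * z) ^ 2 ≤ (k - 1) ^ 2 := by
  nlinarith [mul_le_mul_of_nonneg_left h hk.le]

theorem abs_le_of_sq_add_sq_le {a b r : ℝ} (h : a ^ 2 + b ^ 2 ≤ r ^ 2) (hr : 0 ≤ r) :
    |a| ≤ r ∧ |b| ≤ r :=
  ⟨abs_le_of_sq_le_sq (by nlinarith [sq_nonneg b]) hr,
    abs_le_of_sq_le_sq (by nlinarith [sq_nonneg a]) hr⟩

theorem bounds_of_quadratic_le {p u v : ℝ} (hp : 0 < p)
    (h : (2 * p + 3) * ((p * u) ^ 2 + (p * v) ^ 2) ≤ 2 * (p * u) + (2 * p + 1)) :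
    (-(1 / p) * ((2 * p + 1) / (2 * p + 3)) ≤ u ∧ u ≤ 1 / p) ∧
      |v| ≤ (2 / p) * ((p + 1) / (2 * p + 3)) := by
  have hk : 0 < 2 * p + 3 := by positivity
  have hdisc := sq_add_sq_le_of_quadratic_le (w := p * u) (z := p * v) hk (by linarith)
  obtain ⟨hw, hz⟩ := abs_le_of_sq_add_sq_le hdisc (by linarith)
  obtain ⟨hw₁, hw₂⟩ := abs_le.mp hw
  rw [abs_mul, abs_mul, abs_of_pos hk, abs_of_pos hp] at hz
  refine ⟨⟨?_, ?_⟩, ?_⟩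
  · rw [neg_mul, one_div_mul_eq_div, div_div, neg_le, le_div_iff₀ (by positivity)]
    nlinarith
  · rw [le_div_iff₀ hp]
    nlinarith
  · rw [div_mul_div_comm, le_div_iff₀ (by positivity)]
    nlinarith

theorem quadratic_le_of_boundary_term_nonneg {R α x y : ℝ} (hR : 0 < R) (hα : 0 < α)
    (h : (-tanh R * (2 * cosh R ^ 2 + 1) / cosh R ^ 2) * (x ^ 2 + y ^ 2) +
        (tanh R / (2 * α ^ 2 * cosh R ^ 2 * sinh R ^ 2)) * x +
        (tanh R + tanh R ^ 3) / (16 * α ^ 4 * sinh R ^ 4) ≥ 0) :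
    (2 * sinh R ^ 2 + 3) *
        ((sinh R ^ 2 * (4 * α ^ 2 * x)) ^ 2 + (sinh R ^ 2 * (4 * α ^ 2 * y)) ^ 2) ≤
      2 * (sinh R ^ 2 * (4 * α ^ 2 * x)) + (2 * sinh R ^ 2 + 1) := by
  have hs : 0 < sinh R := sinh_pos_iff.mpr hR
  have hc : 0 < cosh R := cosh_pos R
  rw [tanh_eq_sinh_div_cosh, ge_iff_le] at h
  field_simp at h
  rw [cosh_sq'] at h
  nlinarith

theorem derivative_estimates_core (R α x y : ℝ) (hR : 0 < R) (hα : 0 < α)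
    (h : (-Real.tanh R * (2 * Real.cosh R ^ 2 + 1) / Real.cosh R ^ 2) * (x ^ 2 + y ^ 2) +
        (Real.tanh R / (2 * α ^ 2 * Real.cosh R ^ 2 * Real.sinh R ^ 2)) * x +
        (Real.tanh R + Real.tanh R ^ 3) / (16 * α ^ 4 * Real.sinh R ^ 4) ≥ 0) :
    (-(1 / Real.sinh R ^ 2) * ((2 * Real.sinh R ^ 2 + 1) / (2 * Real.sinh R ^ 2 + 3)) ≤
        4 * α ^ 2 * x ∧
      4 * α ^ 2 * x ≤ 1 / Real.sinh R ^ 2) ∧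
    |4 * α ^ 2 * y| ≤ (2 / Real.sinh R ^ 2) * (Real.cosh R ^ 2 / (2 * Real.cosh R ^ 2 + 1)) := by
  have hp : 0 < sinh R ^ 2 := by positivity
  have hk : 2 * cosh R ^ 2 + 1 = 2 * sinh R ^ 2 + 3 := by rw [cosh_sq']; ring
  rw [hk, cosh_sq', add_comm 1]
  exact bounds_of_quadratic_le hp (quadratic_le_of_boundary_term_nonneg hR hα h)
end

section
/- For every real number z with 0.48 ≤ z ≤ 1, one has 2·(1 + z²)/(1.69785·z³·(3 − z²)) ≤ 5. -/
/-! The quotient `(1 + z²) / (z³ (3 - z²))` is decreasing on `(0, 1]`, so the left side is largest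
at `z = 0.48`, where it is about `4.73`. -/

open Set

/-- Cross-multiplied, the difference of the two sides factors as `(z - a) * q(a, z)`, and every
negative monomial of `q` is dominated by one of its positive ones when `a, z ∈ (0, 1]`. -/
theorem antitoneOn_one_add_sq_div_cube_mul_three_sub_sq :
    AntitoneOn (fun z : ℝ => (1 + z ^ 2) / (z ^ 3 * (3 - z ^ 2))) (Ioc 0 1) := by
  rintro a ⟨ha₀, ha₁⟩ z ⟨hz₀, hz₁⟩ haz
  have hq : 0 ≤ 3 * (z ^ 2 + a * z + a ^ 2) + 3 * a ^ 2 * z ^ 2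
      - (z ^ 4 + z ^ 3 * a + z ^ 2 * a ^ 2 + z * a ^ 3 + a ^ 4)
      - a ^ 2 * z ^ 2 * (z ^ 2 + z * a + a ^ 2) := by
    have ha2 : a ^ 2 ≤ 1 := pow_le_one₀ ha₀.le ha₁
    have hz2 : z ^ 2 ≤ 1 := pow_le_one₀ hz₀.le hz₁
    have haz' : 0 ≤ a * z := by positivity
    nlinarith [mul_le_mul_of_nonneg_left hz2 (sq_nonneg z),
      mul_le_mul_of_nonneg_left ha2 (sq_nonneg a),
      mul_le_mul_of_nonneg_left hz2 haz', mul_le_mul_of_nonneg_left ha2 haz',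
      mul_le_mul_of_nonneg_left (mul_le_one₀ ha2 (sq_nonneg z) hz2) (sq_nonneg z),
      mul_le_mul_of_nonneg_left (mul_le_one₀ ha2 (sq_nonneg z) hz2) (sq_nonneg a),
      mul_le_mul_of_nonneg_left (mul_le_one₀ ha2 (sq_nonneg z) hz2) haz']
  have hz3 : 0 < 3 - z ^ 2 := by nlinarith
  have ha3 : 0 < 3 - a ^ 2 := by nlinarith
  rw [div_le_div_iff₀ (by positivity) (by positivity)]
  nlinarith [mul_nonneg (sub_nonneg.2 haz) hq]

theorem z_inequality_lemma_4_6 (z : ℝ) (h₁ : 0.48 ≤ z) (h₂ : z ≤ 1) :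
    2 * (1 + z ^ 2) / (1.69785 * z ^ 3 * (3 - z ^ 2)) ≤ 5 := by
  have hz : z ∈ Ioc (0 : ℝ) 1 := ⟨by linarith, h₂⟩
  have hmono := antitoneOn_one_add_sq_div_cube_mul_three_sub_sq ⟨by norm_num, by norm_num⟩ hz h₁
  calc 2 * (1 + z ^ 2) / (1.69785 * z ^ 3 * (3 - z ^ 2))
      = 2 / 1.69785 * ((1 + z ^ 2) / (z ^ 3 * (3 - z ^ 2))) := by rw [mul_assoc, mul_div_mul_comm]
    _ ≤ 2 / 1.69785 * ((1 + 0.48 ^ 2) / (0.48 ^ 3 * (3 - 0.48 ^ 2))) := by gcongr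
    _ ≤ 5 := by norm_num
end

section
/- Let D > 0, let z be a real number with 0.48 ≤ z < 1, and let P, Q be nonnegative reals with P ≤ 2π/D and Q ≤ 1/D. Then P · Q · ((1 + z²)/(1.69785·z·(1 − z²))) · (2·(1 − z²)/(3z² − z⁴)) ≤ 10π/D². -/
/-!
After cancelling `1 - z²`, the `z`-dependent factor is `2(1 + z²) / (1.69785 z³ (3 - z²))`.
It decreases on `[0.48, 1)` from about `4.73`, so it is at most `5`, and the bounds on `P` and `Q`
turn the whole product into at most `(2π/D) · (1/D) · 5`.
-/

open Real

lemma two_mul_one_add_sq_le_of_mem_Icc {z : ℝ} (hz₁ : 0.48 ≤ z) (hz₂ : z ≤ 1) :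
    2 * (1 + z ^ 2) ≤ 5 * 1.69785 * (z ^ 3 * (3 - z ^ 2)) := by
  have h₀ : 0 ≤ z - 0.48 := by linarith
  have h₁ : 0 ≤ 1 - z := by linarith
  nlinarith [mul_nonneg h₀ h₁, mul_nonneg (mul_nonneg h₀ h₀) h₁, mul_nonneg (mul_nonneg h₀ h₀) h₀]

lemma tanh_factor_nonneg {z : ℝ} (hz₀ : 0 < z) (hz₁ : z < 1) :
    0 ≤ (1 + z ^ 2) / (1.69785 * z * (1 - z ^ 2)) * (2 * (1 - z ^ 2) / (3 * z ^ 2 - z ^ 4)) := by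
  have hz_sq : 0 < 1 - z ^ 2 := by nlinarith
  have h_quartic : 0 < 3 * z ^ 2 - z ^ 4 := by nlinarith
  positivity

lemma tanh_factor_le_five {z : ℝ} (hz₁ : 0.48 ≤ z) (hz₂ : z < 1) :
    (1 + z ^ 2) / (1.69785 * z * (1 - z ^ 2)) * (2 * (1 - z ^ 2) / (3 * z ^ 2 - z ^ 4)) ≤ 5 := by
  have hz : 0 < z := by linarith
  have hz_sq : 0 < 1 - z ^ 2 := by nlinarith
  have h_three : 0 < 3 - z ^ 2 := by linarith
  have h_cancel : (1 + z ^ 2) / (1.69785 * z * (1 - z ^ 2)) * (2 * (1 - z ^ 2) / (3 * z ^ 2 - z ^ 4))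
      = 2 * (1 + z ^ 2) / (1.69785 * (z ^ 3 * (3 - z ^ 2))) := by
    rw [show 3 * z ^ 2 - z ^ 4 = z ^ 2 * (3 - z ^ 2) by ring]
    field_simp
  rw [h_cancel, div_le_iff₀ (by positivity), ← mul_assoc]
  exact two_mul_one_add_sq_le_of_mem_Icc hz₁ hz₂.le

theorem dv_dalpha_assembled_general (D z P Q : ℝ) (hD : 0 < D)
    (hz₁ : 0.48 ≤ z) (hz₂ : z < 1)
    (hQ₀ : 0 ≤ Q)
    (hP : P ≤ 2 * π / D) (hQ : Q ≤ 1 / D) :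
    P * Q * ((1 + z ^ 2) / (1.69785 * z * (1 - z ^ 2))) *
        (2 * (1 - z ^ 2) / (3 * z ^ 2 - z ^ 4)) ≤ 10 * π / D ^ 2 := by
  calc P * Q * ((1 + z ^ 2) / (1.69785 * z * (1 - z ^ 2))) *
        (2 * (1 - z ^ 2) / (3 * z ^ 2 - z ^ 4))
      = P * Q * ((1 + z ^ 2) / (1.69785 * z * (1 - z ^ 2)) *
          (2 * (1 - z ^ 2) / (3 * z ^ 2 - z ^ 4))) := by ring
    _ ≤ 2 * π / D * (1 / D) * 5 :=
        mul_le_mul (mul_le_mul hP hQ hQ₀ (by positivity)) (tanh_factor_le_five hz₁ hz₂)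
          (tanh_factor_nonneg (by linarith) hz₂) (by positivity)
    _ = 10 * π / D ^ 2 := by field_simp; ring

theorem dv_dalpha_assembled (D z P Q : ℝ) (hD : 0 < D)
    (hz₁ : 0.48 ≤ z) (hz₂ : z < 1)
    (hP₀ : 0 ≤ P) (hQ₀ : 0 ≤ Q)
    (hP : P ≤ 2 * π / D) (hQ : Q ≤ 1 / D) :
    P * Q * ((1 + z ^ 2) / (1.69785 * z * (1 - z ^ 2))) *
        (2 * (1 - z ^ 2) / (3 * z ^ 2 - z ^ 4)) ≤ 10 * π / D ^ 2 :=
  dv_dalpha_assembled_general D z P Q hD hz₁ hz₂ hQ₀ hP hQ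
end
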